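/- Every proper closed subgroup of Homeo(ω₁) has uncountable index. -/

import Mathlib

noncomputable section
open Ordinal Set Topology

/-- The first uncountable ordinal `ω₁`, as a type, endowed with the order topology. -/
def Omega1 : Type 1 := Set.Iio (Ordinal.omega 1)

instance : LinearOrder Omega1 := inferInstanceAs (LinearOrder (Set.Iio (Ordinal.omega 1)))
instance : TopologicalSpace Omega1 := Preorder.topology Omega1
instance : OrderTopology Omega1 := ⟨rfl⟩

/-- The underlying ordinal of a point of `ω₁`. -/
def Omega1.toOrdinal (x : Omega1) : Ordinal := Subtype.val x

theorem Omega1.toOrdinal_lt (x : Omega1) : x.toOrdinal < Ordinal.omega 1 := Subtype.prop x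

/-- Build a point of `ω₁` from a countable ordinal. -/
def Omega1.mk (o : Ordinal) (h : o < Ordinal.omega 1) : Omega1 := Subtype.mk o h

/-- The group structure on the self-homeomorphism group of a topological space. -/
instance {X : Type*} [TopologicalSpace X] : Group (X ≃ₜ X) where
  mul g h := h.trans g
  one := Homeomorph.refl X
  inv := Homeomorph.symm
  mul_assoc _ _ _ := Homeomorph.ext fun _ => rfl
  one_mul _ := Homeomorph.ext fun _ => rfl
  mul_one _ := Homeomorph.ext fun _ => rfl
  inv_mul_cancel g := Homeomorph.ext fun x => g.symm_apply_apply x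

/-- The topology of pointwise convergence on the homeomorphism group of `ω₁`. -/
instance : TopologicalSpace (Omega1 ≃ₜ Omega1) :=
  TopologicalSpace.induced (fun g : Omega1 ≃ₜ Omega1 => (g : Omega1 → Omega1))
    Pi.topologicalSpace

/-!
If `H` has countable index we show it is dense; being closed, it is then everything. To match a
homeomorphism `g` on a finite set, close off under `g` and `g⁻¹` to get an infinite `δ` with
`g (Iic δ) = Iic δ`, and let `t` be `g` on `Iic δ` and the identity elsewhere. The intervals
`Ioc (δ * (ξ + 1)) (δ * (ξ + 1) + δ)`, `ξ < ω₁`, are uncountably many pairwise disjoint clopen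
copies of `Iic δ`; let `s ξ` swap `Iic δ` with the `ξ`-th one. As `H` has countable index there are
`ξ ≠ η` with `s ξ H = s η H` and `s ξ t H = s η t H`, so `a = (s ξ)⁻¹ * s η` and `t⁻¹ * a * t`
lie in `H`. Now `a` carries `Iic δ` into a copy on which `t` is the identity, so the element
`a⁻¹ * (t⁻¹ * a * t)` of `H` acts as `t`, that is as `g`, on `Iic δ`.
-/

open Function

namespace Equiv

variable {X : Type*} {A B : Set X}

open Classical in
def swapAlong (hAB : Disjoint A B) (e : A ≃ B) : Perm X :=
  Involutive.toPerm
    (fun x => if hA : x ∈ A then e ⟨x, hA⟩ else if hB : x ∈ B then e.symm ⟨x, hB⟩ else x) <| by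
    intro x
    by_cases hA : x ∈ A
    · simp [hA, hAB.notMem_of_mem_right (e ⟨x, hA⟩).2]
    by_cases hB : x ∈ B
    · simp [hA, hB]
    · simp [hA, hB]

theorem swapAlong_apply_of_mem {hAB : Disjoint A B} {e : A ≃ B} {x : X} (hx : x ∈ A) :
    swapAlong hAB e x = e ⟨x, hx⟩ :=
  dif_pos hx

theorem swapAlong_apply_of_notMem {hAB : Disjoint A B} {e : A ≃ B} {x : X} (hxA : x ∉ A)
    (hxB : x ∉ B) : swapAlong hAB e x = x :=
  (dif_neg hxA).trans (dif_neg hxB)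

end Equiv

section ClopenPieces

variable {X Y : Type*} [TopologicalSpace X] [TopologicalSpace Y]

theorem IsClopen.continuous_dite {s : Set X} (hs : IsClopen s) [∀ x, Decidable (x ∈ s)]
    {f : s → Y} {g : X → Y} (hf : Continuous f) (hg : Continuous g) :
    Continuous fun x => if h : x ∈ s then f ⟨x, h⟩ else g x := by
  refine continuous_iff_continuousAt.2 fun x => ?_
  by_cases hx : x ∈ s
  · have hs' : ContinuousOn (fun x => if h : x ∈ s then f ⟨x, h⟩ else g x) s := by
      rw [continuousOn_iff_continuous_domRestrict]
      exact hf.congr fun y => by simp [y.2]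
    exact hs'.continuousAt (hs.isOpen.mem_nhds hx)
  · refine hg.continuousAt.congr ?_
    filter_upwards [hs.isClosed.isOpen_compl.mem_nhds hx] with y hy
    rw [dif_neg hy]

namespace Homeomorph

section SwapAlong

variable {A B : Set X}

open Classical in
def swapAlong (hA : IsClopen A) (hB : IsClopen B) (hAB : Disjoint A B) (e : A ≃ₜ B) :
    X ≃ₜ X :=
  have hc : Continuous (Equiv.swapAlong hAB e.toEquiv) :=
    hA.continuous_dite (continuous_subtype_val.comp e.continuous)
      (hB.continuous_dite (continuous_subtype_val.comp e.symm.continuous) continuous_id)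
  ⟨Equiv.swapAlong hAB e.toEquiv, hc, hc⟩

variable {hA : IsClopen A} {hB : IsClopen B} {hAB : Disjoint A B} {e : A ≃ₜ B} {x : X}

theorem swapAlong_apply_of_mem (hx : x ∈ A) : swapAlong hA hB hAB e x = e ⟨x, hx⟩ :=
  Equiv.swapAlong_apply_of_mem (hAB := hAB) hx

theorem swapAlong_apply_of_notMem (hxA : x ∉ A) (hxB : x ∉ B) : swapAlong hA hB hAB e x = x :=
  Equiv.swapAlong_apply_of_notMem (hAB := hAB) hxA hxB

end SwapAlong

section PiecewiseId

variable {U : Set X}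

open Classical in
def piecewiseId (hU : IsClopen U) (f : X ≃ₜ X) (hf : ∀ x, f x ∈ U ↔ x ∈ U) : X ≃ₜ X where
  toFun := U.piecewise f id
  invFun := U.piecewise f.symm id
  left_inv x := by
    by_cases hx : x ∈ U
    · simp [hx, hf]
    · simp [hx]
  right_inv x := by
    by_cases hx : x ∈ U
    · simp [hx, ← hf (f.symm x)]
    · simp [hx]
  continuous_toFun := f.continuous.piecewise
    (by simp [isClopen_iff_frontier_eq_empty.1 hU]) continuous_id
  continuous_invFun := f.symm.continuous.piecewise
    (by simp [isClopen_iff_frontier_eq_empty.1 hU]) continuous_id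

variable {hU : IsClopen U} {f : X ≃ₜ X} {hf : ∀ x, f x ∈ U ↔ x ∈ U} {x : X}

open Classical in
theorem piecewiseId_apply_of_mem (hx : x ∈ U) : piecewiseId hU f hf x = f x :=
  piecewise_eq_of_mem _ _ _ hx

open Classical in
theorem piecewiseId_apply_of_notMem (hx : x ∉ U) : piecewiseId hU f hf x = x :=
  piecewise_eq_of_notMem _ _ _ hx

end PiecewiseId

theorem inv_mul_conj_apply {A B : Set X} {a t : X ≃ₜ X} (ha : MapsTo a A B)
    (ht : ∀ y ∈ B, t y = y) (htA : MapsTo t A A) {x : X} (hx : x ∈ A) :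
    (a⁻¹ * (t⁻¹ * a * t)) x = t x := by
  have hfix : t⁻¹ (a (t x)) = a (t x) := by
    rw [inv_apply, symm_apply_eq, ht _ (ha (htA hx))]
  simp only [mul_apply, hfix, inv_apply, symm_apply_apply]

end Homeomorph

end ClopenPieces

theorem Subgroup.exists_ne_mem_and_conj_mem {G ι : Type*} [Group G] [Uncountable ι]
    (H : Subgroup G) [Countable (G ⧸ H)] (s : ι → G) (t : G) :
    ∃ i j, i ≠ j ∧ (s i)⁻¹ * s j ∈ H ∧ t⁻¹ * ((s i)⁻¹ * s j) * t ∈ H := by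
  obtain ⟨i, j, hij, hne⟩ := not_injective_iff.1
    (not_injective_uncountable_countable fun i => ((s i : G ⧸ H), (s i * t : G ⧸ H)))
  simp only [Prod.mk.injEq, QuotientGroup.eq] at hij
  refine ⟨i, j, hne, hij.1, ?_⟩
  simpa [mul_assoc] using hij.2

theorem Homeomorph.exists_mem_eqOn_of_countable_quotient {X ι : Type*} [TopologicalSpace X]
    [Uncountable ι] {A : Set X} {B : ι → Set X} (hA : IsClopen A) (hB : ∀ i, IsClopen (B i))
    (hAB : ∀ i, Disjoint A (B i)) (hBB : Pairwise (Disjoint on B)) (e : ∀ i, A ≃ₜ B i)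
    (H : Subgroup (X ≃ₜ X)) [Countable ((X ≃ₜ X) ⧸ H)] (g : X ≃ₜ X)
    (hg : ∀ x, g x ∈ A ↔ x ∈ A) : ∃ h ∈ H, EqOn h g A := by
  let s i := swapAlong hA (hB i) (hAB i) (e i)
  let t := piecewiseId hA g hg
  obtain ⟨i, j, hij, ha, hta⟩ := H.exists_ne_mem_and_conj_mem s t
  have hs : ∀ y ∈ B j, s i y = y := fun y hy => swapAlong_apply_of_notMem
    ((hAB j).notMem_of_mem_right hy) ((hBB hij).notMem_of_mem_right hy)
  have ht : ∀ y ∈ B j, t y = y := fun y hy =>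
    piecewiseId_apply_of_notMem ((hAB j).notMem_of_mem_right hy)
  have hmaps : MapsTo ((s i)⁻¹ * s j) A (B j) := fun x hx => by
    have hsj : s j x ∈ B j := by
      simp only [s, swapAlong_apply_of_mem hx, Subtype.coe_prop]
    rwa [mul_apply, inv_apply, (symm_apply_eq _).2 (hs _ hsj).symm]
  have htA : MapsTo t A A := fun x hx => by
    rw [piecewiseId_apply_of_mem hx]
    exact (hg x).2 hx
  refine ⟨_, H.mul_mem (H.inv_mem ha) hta, fun x hx => ?_⟩
  rw [inv_mul_conj_apply hmaps ht htA hx, piecewiseId_apply_of_mem hx]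

section OrderTopology

variable {α : Type*} [LinearOrder α] [TopologicalSpace α] [OrderTopology α]

theorem isClopen_Iic_of_succOrder [SuccOrder α] [NoMaxOrder α] (a : α) : IsClopen (Iic a) :=
  ⟨isClosed_Iic, Order.Iio_succ a ▸ isOpen_Iio⟩

theorem isClopen_Ioc_of_succOrder [SuccOrder α] [NoMaxOrder α] (a b : α) :
    IsClopen (Ioc a b) := by
  rw [← Ioi_inter_Iic]
  exact IsClopen.inter ⟨Order.Ici_succ a ▸ isClosed_Ici, isOpen_Ioi⟩
    (isClopen_Iic_of_succOrder b)

theorem mapsTo_Iic_of_isLUB {f : α → α} (hf : Continuous f) {d : ℕ → α} {δ : α}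
    (hδ : IsLUB (range d) δ) (hd : ∀ n x, x ≤ d n → f x ≤ d (n + 1)) :
    MapsTo f (Iic δ) (Iic δ) := by
  have hrange : range d ⊆ f ⁻¹' Iic δ := by
    rintro _ ⟨n, rfl⟩
    exact (hd n _ le_rfl).trans (hδ.1 ⟨n + 1, rfl⟩)
  intro x (hx : x ≤ δ)
  rcases hx.lt_or_eq with hlt | rfl
  · obtain ⟨_, ⟨n, rfl⟩, hn⟩ := (lt_isLUB_iff hδ).1 hlt
    exact (hd n x hn.le).trans (hδ.1 ⟨n + 1, rfl⟩)
  · exact closure_minimal hrange (isClosed_Iic.preimage hf) (hδ.mem_closure (range_nonempty d))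

end OrderTopology

namespace Omega1

instance : WellFoundedLT Omega1 := inferInstanceAs (WellFoundedLT (Iio (ω_ 1)))

noncomputable instance : SuccOrder Omega1 := inferInstanceAs (SuccOrder (Iio (ω_ 1)))

instance : NoMaxOrder Omega1 := (Cardinal.isSuccLimit_omega 1).isSuccPrelimit.noMaxOrder_Iio

instance : One Omega1 := ⟨mk 1 (one_lt_omega0.trans_le (omega0_le_omega 1))⟩

instance : Add Omega1 :=
  ⟨fun a b => mk (a.toOrdinal + b.toOrdinal)
    (isPrincipal_add_omega 1 a.toOrdinal_lt b.toOrdinal_lt)⟩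

instance : Mul Omega1 :=
  ⟨fun a b => mk (a.toOrdinal * b.toOrdinal)
    (isPrincipal_mul_omega 1 a.toOrdinal_lt b.toOrdinal_lt)⟩

@[simp] theorem toOrdinal_one : (1 : Omega1).toOrdinal = 1 := rfl

@[simp] theorem toOrdinal_add (a b : Omega1) : (a + b).toOrdinal = a.toOrdinal + b.toOrdinal :=
  rfl

@[simp] theorem toOrdinal_mul (a b : Omega1) : (a * b).toOrdinal = a.toOrdinal * b.toOrdinal :=
  rfl

@[simp] theorem toOrdinal_le_toOrdinal {a b : Omega1} : a.toOrdinal ≤ b.toOrdinal ↔ a ≤ b :=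
  Iff.rfl

@[simp] theorem toOrdinal_lt_toOrdinal {a b : Omega1} : a.toOrdinal < b.toOrdinal ↔ a < b :=
  Iff.rfl

theorem toOrdinal_injective : Injective toOrdinal := Subtype.val_injective

theorem countable_Iic (b : Omega1) : (Iic b).Countable := by
  have hb : (Iio (Order.succ b.toOrdinal)).Countable := by
    rw [← Cardinal.le_aleph0_iff_set_countable, Cardinal.mk_Iio_ordinal,
      Cardinal.lift_le_aleph0, ← Order.lt_succ_iff, Cardinal.succ_aleph0,
      ← Cardinal.lt_omega_iff_card_lt]
    exact (Cardinal.isSuccLimit_omega 1).succ_lt b.toOrdinal_lt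
  refine MapsTo.countable_of_injOn (fun x (hx : x ≤ b) => ?_) toOrdinal_injective.injOn hb
  exact Order.lt_succ_of_le (toOrdinal_le_toOrdinal.2 hx)

theorem bddAbove_of_countable {s : Set Omega1} (hs : s.Countable) : BddAbove s := by
  have : Countable s := hs.to_subtype
  refine ⟨mk (⨆ x : s, x.1.toOrdinal) (Ordinal.iSup_lt_omega_one fun x => x.1.toOrdinal_lt),
    fun x hx => ?_⟩
  exact Ordinal.le_iSup (fun x : s => x.1.toOrdinal) ⟨x, hx⟩

instance : Uncountable Omega1 :=
  ⟨fun h => not_bddAbove_univ (bddAbove_of_countable (countable_univ_iff.2 h))⟩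

theorem exists_isLUB_range (d : ℕ → Omega1) : ∃ δ, IsLUB (range d) δ :=
  ⟨_, wellFounded_lt.min_mem _ (bddAbove_of_countable (countable_range d)),
    fun _ hb => wellFounded_lt.min_le hb⟩

theorem exists_le_forall_apply_le_iff (g : Omega1 ≃ₜ Omega1) (β : Omega1) :
    ∃ δ, β ≤ δ ∧ ∀ x, g x ≤ δ ↔ x ≤ δ := by
  have step (b : Omega1) : ∃ b', ∀ x ≤ b, g x ≤ b' ∧ g.symm x ≤ b' := by
    obtain ⟨b', hb'⟩ := bddAbove_of_countable
      (((countable_Iic b).image g).union ((countable_Iic b).image g.symm))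
    exact ⟨b', fun x hx => ⟨hb' (Or.inl ⟨x, hx, rfl⟩), hb' (Or.inr ⟨x, hx, rfl⟩)⟩⟩
  choose next hnext using step
  obtain ⟨δ, hδ⟩ := exists_isLUB_range fun n => next^[n] β
  have hg := mapsTo_Iic_of_isLUB g.continuous hδ fun n x hx => by
    simpa only [iterate_succ_apply'] using (hnext _ x hx).1
  have hg' := mapsTo_Iic_of_isLUB g.symm.continuous hδ fun n x hx => by
    simpa only [iterate_succ_apply'] using (hnext _ x hx).2
  refine ⟨δ, hδ.1 ⟨0, rfl⟩, fun x => ⟨fun hx => ?_, fun hx => hg hx⟩⟩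
  simpa using hg' hx

theorem strictMono_add_left (c : Omega1) : StrictMono (c + ·) :=
  fun _ _ h => (add_lt_add_iff_left c.toOrdinal).2 h

theorem image_add_one_add_Iic {δ : Omega1} (hδ : ω ≤ δ.toOrdinal) (m : Omega1) :
    (m + 1 + ·) '' Iic δ = Ioc m (m + δ) := by
  have hδ' : 1 + δ.toOrdinal = δ.toOrdinal := one_add_of_omega0_le hδ
  ext y
  simp only [mem_image, mem_Iic, mem_Ioc, ← toOrdinal_le_toOrdinal, ← toOrdinal_lt_toOrdinal,
    toOrdinal_add]
  constructor
  · rintro ⟨x, hx, rfl⟩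
    simp only [toOrdinal_add, toOrdinal_one]
    refine ⟨(Order.lt_add_one_iff.2 le_rfl).trans_le le_self_add, ?_⟩
    rw [← hδ', ← add_assoc]
    exact add_le_add_right hx _
  · rintro ⟨hmy, hym⟩
    have hle : m.toOrdinal + 1 ≤ y.toOrdinal := Order.add_one_le_of_lt hmy
    refine ⟨mk (y.toOrdinal - (m.toOrdinal + 1))
      ((Ordinal.sub_le_self _ _).trans_lt y.toOrdinal_lt), ?_,
      toOrdinal_injective (Ordinal.add_sub_cancel_of_le hle)⟩
    show y.toOrdinal - (m.toOrdinal + 1) ≤ δ.toOrdinal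
    rwa [Ordinal.sub_le, add_assoc, hδ']

def block (δ ξ : Omega1) : Set Omega1 := Ioc (δ * (ξ + 1)) (δ * (ξ + 1) + δ)

theorem isClopen_block (δ ξ : Omega1) : IsClopen (block δ ξ) :=
  isClopen_Ioc_of_succOrder _ _

theorem disjoint_Iic_block (δ ξ : Omega1) : Disjoint (Iic δ) (block δ ξ) :=
  Iic_disjoint_Ioc (Ordinal.le_mul_left δ.toOrdinal (Order.lt_add_one_iff.2 zero_le))

theorem pairwise_disjoint_block (δ : Omega1) : Pairwise (Disjoint on block δ) := by
  refine (pairwise_disjoint_on _).2 fun ξ η h => Ioc_disjoint_Ioc_of_le ?_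
  rw [← toOrdinal_le_toOrdinal]
  simp only [toOrdinal_add, toOrdinal_mul, toOrdinal_one, ← mul_add_one]
  exact mul_le_mul_right (add_le_add_left (Order.add_one_le_of_lt (toOrdinal_lt_toOrdinal.2 h)) 1) _

def blockHomeomorph {δ : Omega1} (hδ : ω ≤ δ.toOrdinal) (ξ : Omega1) : Iic δ ≃ₜ block δ ξ :=
  (((strictMono_add_left _).strictMonoOn (Iic δ)).orderIso _ _ |>.trans
    (OrderIso.setCongr _ _ (image_add_one_add_Iic hδ _))).toHomeomorph

theorem mem_closure_of_forall_finset {S : Set (Omega1 ≃ₜ Omega1)} {g : Omega1 ≃ₜ Omega1}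
    (h : ∀ F : Finset Omega1, ∃ f ∈ S, ∀ x ∈ F, f x = g x) : g ∈ closure S := by
  refine mem_closure_iff.2 fun o ho hgo => ?_
  obtain ⟨t, ht, rfl⟩ := isOpen_induced_iff.1 ho
  obtain ⟨F, u, hu, hpi⟩ := isOpen_pi_iff.1 ht _ hgo
  obtain ⟨f, hfS, hf⟩ := h F
  exact ⟨f, hpi fun x hx => show f x ∈ u x from hf x hx ▸ (hu x hx).2, hfS⟩

theorem exists_mem_forall_le_apply_eq (H : Subgroup (Omega1 ≃ₜ Omega1))
    [Countable ((Omega1 ≃ₜ Omega1) ⧸ H)] (g : Omega1 ≃ₜ Omega1) (β : Omega1) :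
    ∃ h ∈ H, ∀ x ≤ β, h x = g x := by
  obtain ⟨δ, hβδ, hg⟩ := exists_le_forall_apply_le_iff g (max β (mk ω omega0_lt_omega_one))
  have hδ : ω ≤ δ.toOrdinal := (le_max_right _ _).trans hβδ
  obtain ⟨h, hH, hh⟩ := Homeomorph.exists_mem_eqOn_of_countable_quotient
    (isClopen_Iic_of_succOrder δ) (isClopen_block δ) (disjoint_Iic_block δ)
    (pairwise_disjoint_block δ) (blockHomeomorph hδ) H g hg
  exact ⟨h, hH, fun x hx => hh (hx.trans ((le_max_left _ _).trans hβδ))⟩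

end Omega1

/-- Every proper closed subgroup of `Homeo(ω₁)` has uncountable index. -/
theorem proper_closed_subgroup_uncountable_index (H : Subgroup (Omega1 ≃ₜ Omega1))
    (hclosed : IsClosed (H : Set (Omega1 ≃ₜ Omega1))) (hne : H ≠ ⊤) :
    ¬ Countable ((Omega1 ≃ₜ Omega1) ⧸ H) := by
  intro hcount
  refine hne ((Subgroup.eq_top_iff' H).2 fun g => ?_)
  rw [← SetLike.mem_coe, ← hclosed.closure_eq]
  refine Omega1.mem_closure_of_forall_finset fun F => ?_
  obtain ⟨β, hβ⟩ := F.bddAbove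
  obtain ⟨h, hH, hh⟩ := Omega1.exists_mem_forall_le_apply_eq H g β
  exact ⟨h, hH, fun x hx => hh x (hβ hx)⟩
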